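/- For the power functions p_k(λ) = const + ∑_i[(λ_i-i+1/2)^k - (-i+1/2)^k] (with constant (1-2^{-k})ζ(-k)), one has p_k(λ') = (-1)^{k+1} p_k(λ) for every partition λ, where λ' is the conjugate partition. -/

import Mathlib

/-!
Both sums telescope into sums over the boxes of the Young diagram: the row of length `λ_j`
contributes `∑_{n < λ_j} φ(n - j)` and the column of length `λ'_n` contributes
`∑_{j < λ'_n} φ(j - n)`, where `φ(x) = (x + 1/2)^k - (x - 1/2)^k`.
Since `φ(-x) = (-1)^(k+1) φ(x)`, the two box sums agree up to that sign. The constant is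
compatible with the sign because `ζ(-k) = 0` for even `k ≥ 2`, while for `k = 0` the factor
`1 - 2^{-k}` vanishes.
-/

/-- `ζ(-k) = (-1)^k B_{k+1}/(k+1)`. -/
noncomputable def zetaNeg (k : ℕ) : ℝ := (-1) ^ k * (bernoulli (k + 1) : ℝ) / (k + 1)

/-- `p_k(λ) = (1-2^{-k})ζ(-k) + ∑_i [(λ_i-i+1/2)^k - (-i+1/2)^k]`,
summed over `i ≤ N` for any `N` beyond which all terms vanish. -/
noncomputable def ppow (k : ℕ) (lam : ℕ → ℕ) (N : ℕ) : ℝ :=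
  (1 - ((2 : ℝ) ^ k)⁻¹) * zetaNeg k +
    ∑ n ∈ Finset.range N, (((lam n : ℝ) - n - 1 / 2) ^ k - (-(n : ℝ) - 1 / 2) ^ k)

/-- The conjugate partition: `λ'_{n+1} = #{m : λ_{m+1} > n}`. -/
noncomputable def conjP (lam : ℕ → ℕ) : ℕ → ℕ := fun n => Set.ncard {m : ℕ | n < lam m}

open Finset

section ConjugatePartition

variable {lam : ℕ → ℕ}

lemma lt_conjP_iff (hA : Antitone lam) {N : ℕ} (hN : lam N = 0) (n j : ℕ) :
    j < conjP lam n ↔ n < lam j := by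
  have hex : ∃ m, lam m ≤ n := ⟨N, hN ▸ n.zero_le⟩
  have hfind : ∀ m, m < Nat.find hex ↔ n < lam m := fun m => by
    rw [Nat.lt_find_iff]
    exact ⟨fun h => not_le.1 (h m le_rfl), fun h i hi => not_le.2 (h.trans_le (hA hi))⟩
  have hset : {m | n < lam m} = Set.Iio (Nat.find hex) := by
    ext m
    exact (hfind m).symm
  rw [conjP, hset, Set.ncard_Iio_nat, hfind]

theorem sum_range_conjP_eq_sum_range {β : Type*} [AddCommMonoid β] (hA : Antitone lam)
    {N M : ℕ} (hN : lam N = 0) (hM : conjP lam M = 0) (g : ℕ → ℕ → β) :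
    ∑ n ∈ range M, ∑ j ∈ range (conjP lam n), g n j =
      ∑ j ∈ range N, ∑ n ∈ range (lam j), g n j := by
  have hiff := lt_conjP_iff hA hN
  have hlam_le : ∀ j, lam j ≤ M := fun j =>
    not_lt.1 fun h => by simpa [hM] using (hiff M j).2 h
  have hconjP_le : ∀ n, conjP lam n ≤ N := fun n =>
    not_lt.1 fun h => by simpa [hN] using (hiff n N).1 h
  set D := (range M ×ˢ range N).filter fun p => p.1 < lam p.2
  have hbound : ∀ n j, n < lam j → n < M ∧ j < N := fun n j h =>
    ⟨h.trans_le (hlam_le j), (hiff n j).2 h |>.trans_le (hconjP_le n)⟩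
  rw [← sum_finset_product' D, ← sum_finset_product_right' D] <;>
  · rintro ⟨n, j⟩
    simp only [D, mem_filter, mem_product, mem_range, hiff]
    have := hbound n j
    tauto

end ConjugatePartition

lemma sum_range_half_shift_pow_sub (k m : ℕ) (a : ℝ) :
    ∑ j ∈ range m, (((j : ℝ) - a + 1 / 2) ^ k - ((j : ℝ) - a - 1 / 2) ^ k) =
      ((m : ℝ) - a - 1 / 2) ^ k - (-a - 1 / 2) ^ k := by
  have := sum_range_sub (fun j : ℕ => ((j : ℝ) - a - 1 / 2) ^ k) m
  push_cast at this
  convert this using 3 <;> ring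

lemma half_shift_pow_sub_swap (k : ℕ) (a b : ℝ) :
    (b - a + 1 / 2) ^ k - (b - a - 1 / 2) ^ k =
      (-1) ^ (k + 1) * ((a - b + 1 / 2) ^ k - (a - b - 1 / 2) ^ k) := by
  rw [show b - a + 1 / 2 = -(a - b - 1 / 2) by ring, show b - a - 1 / 2 = -(a - b + 1 / 2) by ring,
    neg_pow, neg_pow (a - b + 1 / 2), pow_succ]
  ring

lemma neg_one_pow_succ_mul_ppow_const (k : ℕ) :
    (-1) ^ (k + 1) * ((1 - ((2 : ℝ) ^ k)⁻¹) * zetaNeg k) =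
      (1 - ((2 : ℝ) ^ k)⁻¹) * zetaNeg k := by
  rcases Nat.even_or_odd k with hk | hk
  · rcases Nat.eq_zero_or_pos k with rfl | hpos
    · simp
    · have hB : bernoulli (k + 1) = 0 := by
        rw [bernoulli_eq_bernoulli'_of_ne_one (by omega)]
        exact bernoulli'_eq_zero_of_odd hk.add_one (by omega)
      simp [zetaNeg, hB]
  · rw [hk.add_one.neg_one_pow, one_mul]

theorem stmt15_general (k : ℕ) (lam : ℕ → ℕ) (hA : Antitone lam)
    (N M : ℕ) (hN : ∀ i, N ≤ i → lam i = 0) (hM : ∀ i, M ≤ i → conjP lam i = 0) :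
    ppow k (conjP lam) M = (-1) ^ (k + 1) * ppow k lam N := by
  have hboxes := sum_range_conjP_eq_sum_range hA (hN N le_rfl) (hM M le_rfl)
    fun n j => ((j : ℝ) - n + 1 / 2) ^ k - ((j : ℝ) - n - 1 / 2) ^ k
  have hrow : ∀ j : ℕ,
      ∑ n ∈ range (lam j), (((j : ℝ) - n + 1 / 2) ^ k - ((j : ℝ) - n - 1 / 2) ^ k) =
        (-1) ^ (k + 1) * (((lam j : ℝ) - j - 1 / 2) ^ k - (-(j : ℝ) - 1 / 2) ^ k) := fun j => by
    rw [← sum_range_half_shift_pow_sub, mul_sum]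
    exact sum_congr rfl fun n _ => half_shift_pow_sub_swap k n j
  simp only [sum_range_half_shift_pow_sub, hrow, ← mul_sum] at hboxes
  rw [ppow, ppow, mul_add, neg_one_pow_succ_mul_ppow_const, hboxes]

/-- `p_k(λ') = (-1)^{k+1} p_k(λ)`. -/
theorem stmt15 (k : ℕ) (hk : 1 ≤ k) (lam : ℕ → ℕ) (hA : Antitone lam)
    (N M : ℕ) (hN : ∀ i, N ≤ i → lam i = 0) (hM : ∀ i, M ≤ i → conjP lam i = 0) :
    ppow k (conjP lam) M = (-1) ^ (k + 1) * ppow k lam N :=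
  stmt15_general k lam hA N M hN hM
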